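/- Let A be an arbitrary d×d complex matrix, G a Hermitian unitary d×d matrix, V(θ) = exp(−i(θ/2)G), and O a Hermitian d×d matrix that anti-commutes with G. Then, with E_θ the expectation over θ uniform on [−aπ, aπ] for a ∈ (0,1): (1) E_θ (Tr[O V A V†])² = α · (Tr[OA])² + β · (Tr[iGOA])²; (2) E_θ ((d/dθ) Tr[O V A V†])² = β · (Tr[OA])² + α · (Tr[iGOA])², where α = (2 + sin(2aπ)/(aπ))/4, β = (2 − sin(2aπ)/(aπ))/4, and V = V(θ). -/

import Mathlib

open MeasureTheory Matrix BigOperators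
open scoped Nat

noncomputable section

/-- `V(θ) = exp(-i (θ/2) G)` (matrix exponential). -/
def Vrot {d : ℕ} (G : Matrix (Fin d) (Fin d) ℂ) (θ : ℝ) : Matrix (Fin d) (Fin d) ℂ :=
  NormedSpace.exp ((-(θ : ℂ) * Complex.I / 2) • G)

/-- Expectation `E_θ f(θ) = (1/(2aπ)) ∫_{-aπ}^{aπ} f(θ) dθ` of a complex-valued function of a
single parameter `θ` uniform on `[-aπ, aπ]`. -/
def expect1 (a : ℝ) (f : ℝ → ℂ) : ℂ :=
  (1 / (2 * a * Real.pi) : ℂ) * ∫ θ in (-(a * Real.pi))..(a * Real.pi), f θ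

lemma Vrot_eq {d : ℕ} (G : Matrix (Fin d) (Fin d) ℂ) (hGU : G * G = 1) (θ : ℝ) :
    Vrot G θ = (Complex.cos ((θ : ℂ) / 2)) • (1 : Matrix (Fin d) (Fin d) ℂ)
      + (-(Complex.I * Complex.sin ((θ : ℂ) / 2))) • G := by
  rw [Vrot, NormedSpace.exp_eq_tsum ℂ]
  refine HasSum.tsum_eq ?_
  set z : ℂ := (θ : ℂ) / 2 with hz
  set c : ℂ := -(θ : ℂ) * Complex.I / 2 with hc
  have hcz : c = -Complex.I * z := by rw [hc, hz]; ring
  have hc2 : c ^ 2 = -(z ^ 2) := by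
    rw [hcz]; have := Complex.I_sq; ring_nf; rw [Complex.I_sq]; ring
  have hG2 : G ^ 2 = 1 := by rw [sq, hGU]
  clear_value z c
  have heven : ∀ k : ℕ, ((2 * k)! : ℂ)⁻¹ • ((c • G) ^ (2 * k))
      = ((-1 : ℂ) ^ k * z ^ (2 * k) / ((2 * k)! : ℂ)) • (1 : Matrix (Fin d) (Fin d) ℂ) := by
    intro k
    rw [smul_pow, pow_mul, pow_mul, hc2, hG2, one_pow, smul_smul]
    congr 1
    rw [neg_pow, pow_mul]
    field_simp
  have hodd : ∀ k : ℕ, ((2 * k + 1)! : ℂ)⁻¹ • ((c • G) ^ (2 * k + 1))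
      = (-Complex.I * ((-1 : ℂ) ^ k * z ^ (2 * k + 1) / ((2 * k + 1)! : ℂ))) • G := by
    intro k
    have hGk : G ^ (2 * k + 1) = G := by rw [pow_succ, pow_mul, hG2, one_pow, one_mul]
    have hck : c ^ (2 * k + 1) = -Complex.I * ((-1 : ℂ) ^ k * z ^ (2 * k + 1)) := by
      rw [pow_succ, pow_mul, hc2, hcz, neg_pow]
      ring
    rw [smul_pow, hGk, hck, smul_smul]
    congr 1
    field_simp
  have h := HasSum.even_add_odd
    (f := fun n : ℕ => ((n)! : ℂ)⁻¹ • ((c • G) ^ n))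
    (by
      simp only [heven]
      exact (Complex.hasSum_cos z).smul_const (1 : Matrix (Fin d) (Fin d) ℂ))
    (by
      simp only [hodd]
      exact ((Complex.hasSum_sin z).mul_left (-Complex.I)).smul_const G)
  simpa [neg_mul] using h

lemma trace_formula {d : ℕ} (A G O : Matrix (Fin d) (Fin d) ℂ)
    (hGH : G.IsHermitian) (hGU : G * G = 1) (hanti : O * G = -(G * O)) (θ : ℝ) :
    Matrix.trace (O * Vrot G θ * A * (Vrot G θ)ᴴ)
      = (Real.cos θ : ℂ) * Matrix.trace (O * A)
        + (Real.sin θ : ℂ) * (Complex.I * Matrix.trace (G * O * A)) := by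
  rw [Vrot_eq G hGU θ]
  have hconj : ((Complex.cos ((θ : ℂ) / 2)) • (1 : Matrix (Fin d) (Fin d) ℂ)
      + (-(Complex.I * Complex.sin ((θ : ℂ) / 2))) • G)ᴴ
      = (Complex.cos ((θ : ℂ) / 2)) • (1 : Matrix (Fin d) (Fin d) ℂ)
        + (Complex.I * Complex.sin ((θ : ℂ) / 2)) • G := by
    rw [conjTranspose_add, conjTranspose_smul, conjTranspose_smul, conjTranspose_one, hGH.eq]
    congr 1
    · congr 1
      simp [Complex.star_def, ← Complex.cos_conj, map_div₀, Complex.conj_ofReal, map_ofNat]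
    · congr 1
      simp [Complex.star_def, ← Complex.sin_conj, map_div₀, Complex.conj_ofReal, Complex.conj_I,
        map_ofNat]
  rw [hconj]
  have h1 : Matrix.trace (O * A * G) = Matrix.trace (G * O * A) := by
    rw [Matrix.trace_mul_cycle]
  have h2 : Matrix.trace (O * G * A) = -Matrix.trace (G * O * A) := by
    rw [hanti]; simp [Matrix.neg_mul]
  have h3 : Matrix.trace (O * G * A * G) = -Matrix.trace (O * A) := by
    rw [Matrix.trace_mul_cycle]
    have : G * (O * G) = -(O) := by
      rw [hanti]
      simp only [Matrix.mul_neg]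
      rw [← Matrix.mul_assoc, hGU, Matrix.one_mul]
    rw [this]
    simp [Matrix.neg_mul]
  simp only [Matrix.mul_add, Matrix.add_mul, Matrix.mul_smul, Matrix.smul_mul, Matrix.mul_one,
    Matrix.trace_add, Matrix.trace_smul, smul_eq_mul, smul_smul]
  rw [h1, h2, h3]
  have ht : (2 : ℂ) * ((θ : ℂ) / 2) = (θ : ℂ) := by ring
  have e1 : Complex.cos (θ : ℂ) = 2 * Complex.cos ((θ : ℂ) / 2) ^ 2 - 1 := by
    conv_lhs => rw [← ht, Complex.cos_two_mul]
  have e2 : Complex.sin (θ : ℂ) = 2 * Complex.sin ((θ : ℂ) / 2) * Complex.cos ((θ : ℂ) / 2) := by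
    conv_lhs => rw [← ht, Complex.sin_two_mul]
  have e3 := Complex.sin_sq_add_cos_sq ((θ : ℂ) / 2)
  rw [Complex.ofReal_cos, Complex.ofReal_sin, e1, e2]
  linear_combination (Complex.sin ((θ : ℂ) / 2)) ^ 2 * Matrix.trace (O * A) * Complex.I_sq
    - Matrix.trace (O * A) * e3

lemma deriv_trace_formula {d : ℕ} (A G O : Matrix (Fin d) (Fin d) ℂ)
    (hGH : G.IsHermitian) (hGU : G * G = 1) (hanti : O * G = -(G * O)) (θ : ℝ) :
    deriv (fun t => Matrix.trace (O * Vrot G t * A * (Vrot G t)ᴴ)) θ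
      = (Real.cos θ : ℂ) * (Complex.I * Matrix.trace (G * O * A))
        + (Real.sin θ : ℂ) * (-Matrix.trace (O * A)) := by
  have hfun : (fun t : ℝ => Matrix.trace (O * Vrot G t * A * (Vrot G t)ᴴ))
      = fun t : ℝ => Complex.cos (t : ℂ) * Matrix.trace (O * A)
        + Complex.sin (t : ℂ) * (Complex.I * Matrix.trace (G * O * A)) := by
    funext t
    rw [trace_formula A G O hGH hGU hanti t, Complex.ofReal_cos, Complex.ofReal_sin]
  rw [hfun]
  have h1 : HasDerivAt (fun t : ℝ => Complex.cos (t : ℂ) * Matrix.trace (O * A)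
        + Complex.sin (t : ℂ) * (Complex.I * Matrix.trace (G * O * A)))
      ((-Complex.sin (θ : ℂ)) * Matrix.trace (O * A)
        + Complex.cos (θ : ℂ) * (Complex.I * Matrix.trace (G * O * A))) θ :=
    ((Complex.hasDerivAt_cos (θ : ℂ)).comp_ofReal.mul_const _).add
      ((Complex.hasDerivAt_sin (θ : ℂ)).comp_ofReal.mul_const _)
  rw [h1.deriv, Complex.ofReal_cos, Complex.ofReal_sin]
  ring

lemma expect_sq (a : ℝ) (ha : a ∈ Set.Ioo (0 : ℝ) 1) (X Y : ℂ) :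
    expect1 a (fun θ => ((Real.cos θ : ℂ) * X + (Real.sin θ : ℂ) * Y) ^ 2)
      = (((2 + Real.sin (2 * a * Real.pi) / (a * Real.pi)) / 4 : ℝ) : ℂ) * X ^ 2
        + (((2 - Real.sin (2 * a * Real.pi) / (a * Real.pi)) / 4 : ℝ) : ℂ) * Y ^ 2 := by
  obtain ⟨ha0, _⟩ := ha
  have hpi := Real.pi_pos
  have key : ∀ θ : ℝ, ((Real.cos θ : ℂ) * X + (Real.sin θ : ℂ) * Y) ^ 2
      = ((Real.cos θ ^ 2 : ℝ) : ℂ) * X ^ 2 + ((Real.sin θ ^ 2 : ℝ) : ℂ) * Y ^ 2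
        + ((Real.sin θ * Real.cos θ : ℝ) : ℂ) * (2 * X * Y) := by
    intro θ; push_cast; ring
  rw [expect1]
  simp_rw [key]
  have i1 : IntervalIntegrable (fun θ : ℝ => ((Real.cos θ ^ 2 : ℝ) : ℂ) * X ^ 2)
      volume (-(a * Real.pi)) (a * Real.pi) := by
    apply Continuous.intervalIntegrable; fun_prop
  have i2 : IntervalIntegrable (fun θ : ℝ => ((Real.sin θ ^ 2 : ℝ) : ℂ) * Y ^ 2)
      volume (-(a * Real.pi)) (a * Real.pi) := by
    apply Continuous.intervalIntegrable; fun_prop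
  have i3 : IntervalIntegrable (fun θ : ℝ => ((Real.sin θ * Real.cos θ : ℝ) : ℂ) * (2 * X * Y))
      volume (-(a * Real.pi)) (a * Real.pi) := by
    apply Continuous.intervalIntegrable; fun_prop
  rw [intervalIntegral.integral_add (i1.add i2) i3, intervalIntegral.integral_add i1 i2,
    intervalIntegral.integral_mul_const, intervalIntegral.integral_mul_const,
    intervalIntegral.integral_mul_const, intervalIntegral.integral_ofReal,
    intervalIntegral.integral_ofReal, intervalIntegral.integral_ofReal,
    integral_cos_sq, integral_sin_sq, integral_sin_mul_cos₁]
  have hs : Real.sin (2 * a * Real.pi) = 2 * Real.sin (a * Real.pi) * Real.cos (a * Real.pi) := by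
    rw [show 2 * a * Real.pi = 2 * (a * Real.pi) by ring, Real.sin_two_mul]
  rw [hs]
  have ha' : (a : ℂ) ≠ 0 := by exact_mod_cast ha0.ne'
  have hpi' : (Real.pi : ℂ) ≠ 0 := by exact_mod_cast hpi.ne'
  simp only [Real.cos_neg, Real.sin_neg]
  push_cast
  field_simp
  ring

/-- second-moment identities for a Hermitian `O` anti-commuting with a
Hermitian unitary `G`. -/
theorem statement14 {d : ℕ} (hd : 1 ≤ d) (A G O : Matrix (Fin d) (Fin d) ℂ)
    (hGH : G.IsHermitian) (hGU : G * G = 1)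
    (hOH : O.IsHermitian) (hanti : O * G = -(G * O))
    (a : ℝ) (ha : a ∈ Set.Ioo (0 : ℝ) 1) :
    expect1 a (fun θ => (Matrix.trace (O * Vrot G θ * A * (Vrot G θ)ᴴ)) ^ 2) =
      (((2 + Real.sin (2 * a * Real.pi) / (a * Real.pi)) / 4 : ℝ) : ℂ) *
          (Matrix.trace (O * A)) ^ 2 +
        (((2 - Real.sin (2 * a * Real.pi) / (a * Real.pi)) / 4 : ℝ) : ℂ) *
          (Complex.I * Matrix.trace (G * O * A)) ^ 2 ∧
    expect1 a
        (fun θ => (deriv (fun t => Matrix.trace (O * Vrot G t * A * (Vrot G t)ᴴ)) θ) ^ 2) =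
      (((2 - Real.sin (2 * a * Real.pi) / (a * Real.pi)) / 4 : ℝ) : ℂ) *
          (Matrix.trace (O * A)) ^ 2 +
        (((2 + Real.sin (2 * a * Real.pi) / (a * Real.pi)) / 4 : ℝ) : ℂ) *
          (Complex.I * Matrix.trace (G * O * A)) ^ 2 := by
  constructor
  · have hfun : (fun θ : ℝ => (Matrix.trace (O * Vrot G θ * A * (Vrot G θ)ᴴ)) ^ 2)
        = fun θ : ℝ => ((Real.cos θ : ℂ) * Matrix.trace (O * A)
          + (Real.sin θ : ℂ) * (Complex.I * Matrix.trace (G * O * A))) ^ 2 := by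
      funext θ
      rw [trace_formula A G O hGH hGU hanti θ]
    rw [hfun]
    have h := expect_sq a ha (Matrix.trace (O * A)) (Complex.I * Matrix.trace (G * O * A))
    rw [h]
  · have hfun : (fun θ : ℝ =>
          (deriv (fun t => Matrix.trace (O * Vrot G t * A * (Vrot G t)ᴴ)) θ) ^ 2)
        = fun θ : ℝ => ((Real.cos θ : ℂ) * (Complex.I * Matrix.trace (G * O * A))
          + (Real.sin θ : ℂ) * (-Matrix.trace (O * A))) ^ 2 := by
      funext θ
      rw [deriv_trace_formula A G O hGH hGU hanti θ]
    rw [hfun]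
    have h := expect_sq a ha (Complex.I * Matrix.trace (G * O * A)) (-Matrix.trace (O * A))
    rw [h]
    ring

end
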